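/- arXiv:0905.3460 — 2 statements merged into one kernel-verified Lean document; each statement's English description precedes it below -/
import Mathlib

section
/- Let (u_θ)_{θ∈I} be a smooth family of model eigenfunctions of H(θ) with eigenvalues σ(θ). Then the Feynman–Hellmann formula holds: for every θ ∈ I, σ'(θ) = 2 ∫_{ℝ²₊} V_θ ∂_θV_θ u_θ² ds dt = −2 ∫_{ℝ²₊} (t cos θ − s sin θ)(t sin θ + s cos θ) u_θ(s,t)² ds dt. -/
/-
Pairing the eigenvalue equations of `u_θ` and `u_θ'` and using that `H(θ')` is symmetric under
the Neumann condition (Green's identity) gives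
`(σ(θ') - σ(θ)) ⟨u_θ', u_θ⟩ = ⟨(V_θ'² - V_θ²) u_θ', u_θ⟩`.
Divide by `θ' - θ` and let `θ' → θ`: `⟨u_θ', u_θ⟩ → ‖u_θ‖² = 1`, and the right-hand side tends to
`⟨∂_θ(V_θ²) u_θ, u_θ⟩` by dominated convergence, the locally uniform Schwartz bounds on `u_θ'`
supplying the majorant. Since `∂_θ V_θ = V_{θ+π/2}`, this is the formula.
-/

open Real MeasureTheory Set

noncomputable section

/-- Partial derivative with respect to the first variable. -/
def pd1 (u : ℝ → ℝ → ℝ) : ℝ → ℝ → ℝ := fun s t => deriv (fun x => u x t) s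

/-- Partial derivative with respect to the second variable. -/
def pd2 (u : ℝ → ℝ → ℝ) : ℝ → ℝ → ℝ := fun s t => deriv (fun y => u s y) t

/-- The potential `V_θ(s,t) = t cos θ − s sin θ`. -/
def Vpot (θ : ℝ) : ℝ → ℝ → ℝ := fun s t => t * Real.cos θ - s * Real.sin θ

/-- The operator `H(θ) = −∂_s² − ∂_t² + V_θ²` applied to `u`. -/
def Hop (θ : ℝ) (u : ℝ → ℝ → ℝ) : ℝ → ℝ → ℝ :=
  fun s t => - pd1 (pd1 u) s t - pd2 (pd2 u) s t + (Vpot θ s t)^2 * u s t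

/-- Integral over the half-plane `{t > 0}` with respect to `ds dt`. -/
def intHalf (f : ℝ → ℝ → ℝ) : ℝ := ∫ s : ℝ, ∫ t in Set.Ioi (0:ℝ), f s t

/-- Schwartz-class on the closed half-plane: all iterated partial derivatives decay
faster than any power of `|s| + t`. -/
def SchwartzHalf (u : ℝ → ℝ → ℝ) : Prop :=
  ∀ k l n : ℕ, ∃ C : ℝ, ∀ s t : ℝ, 0 ≤ t →
    |pd1^[k] (pd2^[l] u) s t| ≤ C * (1 + |s| + t) ^ (-(n:ℝ))

/-- A model eigenfunction of `H(θ)` with eigenvalue `σ`: smooth up to the boundary,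
Schwartz-class, `L²`-normalized, Neumann boundary condition, and `H(θ)u = σu` on `{t ≥ 0}`. -/
structure IsModelEigen (θ : ℝ) (u : ℝ → ℝ → ℝ) (σ : ℝ) : Prop where
  smooth : ∀ n : ℕ, ContDiff ℝ n (fun p : ℝ × ℝ => u p.1 p.2)
  schwartz : SchwartzHalf u
  normalized : intHalf (fun s t => (u s t)^2) = 1
  neumann : ∀ s : ℝ, pd2 u s 0 = 0
  eigen : ∀ s t : ℝ, 0 ≤ t → Hop θ u s t = σ * u s t

/-- Partial derivative in the parameter `θ` of a family. -/
def pdθ (u : ℝ → ℝ → ℝ → ℝ) : ℝ → ℝ → ℝ → ℝ := fun θ s t => deriv (fun x => u x s t) θ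

/-- A smooth family of model eigenfunctions of `H(θ)` with eigenvalues `σ(θ)`,
parametrized by the open interval `Ioo a b ⊆ (0, π/2)`: the map `(θ,s,t) ↦ u θ s t`
is smooth, all its partial derivatives are Schwartz-class in `(s,t)` locally uniformly
in `θ`, `σ` is smooth, and each `u θ` is a model eigenfunction of `H(θ)`. -/
structure IsSmoothFamily (a b : ℝ) (u : ℝ → ℝ → ℝ → ℝ) (σ : ℝ → ℝ) : Prop where
  sub : Set.Ioo a b ⊆ Set.Ioo 0 (π/2)
  smooth : ∀ n : ℕ, ContDiffOn ℝ n (fun p : ℝ × ℝ × ℝ => u p.1 p.2.1 p.2.2)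
      (Set.Ioo a b ×ˢ (Set.univ : Set (ℝ × ℝ)))
  sigma_smooth : ∀ n : ℕ, ContDiffOn ℝ n σ (Set.Ioo a b)
  schwartz : ∀ θ ∈ Set.Ioo a b, ∀ m k l n : ℕ, ∃ ε > 0, ∃ C : ℝ,
      ∀ θ' ∈ Set.Ioo a b, |θ' - θ| < ε → ∀ s t : ℝ, 0 ≤ t →
      |pd1^[k] (pd2^[l] (pdθ^[m] u θ')) s t| ≤ C * (1 + |s| + t) ^ (-(n:ℝ))
  eigen : ∀ θ ∈ Set.Ioo a b, IsModelEigen θ (u θ) (σ θ)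

open Filter Topology
open scoped ContDiff

abbrev halfPlane : Measure (ℝ × ℝ) := volume.prod (volume.restrict (Ioi 0))

def DecayBound (C : ℝ) (n : ℕ) (f : ℝ → ℝ → ℝ) : Prop :=
  ∀ s t : ℝ, 0 ≤ t → |f s t| ≤ C * ((1 + |s| + t) ^ n)⁻¹

def PolyDecay (n : ℕ) (f : ℝ → ℝ → ℝ) : Prop := ∃ C, DecayBound C n f

lemma one_le_one_add_abs_add {s t : ℝ} (ht : 0 ≤ t) : 1 ≤ 1 + |s| + t := by
  linarith [abs_nonneg s]

lemma decayBound_of_rpow {C : ℝ} {n : ℕ} {f : ℝ → ℝ → ℝ}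
    (hf : ∀ s t : ℝ, 0 ≤ t → |f s t| ≤ C * (1 + |s| + t) ^ (-(n : ℝ))) : DecayBound C n f :=
  fun s t ht => by simpa [Real.rpow_neg_natCast, zpow_neg] using hf s t ht

lemma SchwartzHalf.polyDecay {w : ℝ → ℝ → ℝ} (hw : SchwartzHalf w) (k l n : ℕ) :
    PolyDecay n (pd1^[k] (pd2^[l] w)) :=
  let ⟨C, hC⟩ := hw k l n
  ⟨C, decayBound_of_rpow hC⟩

namespace DecayBound

variable {C D : ℝ} {n m : ℕ} {f g : ℝ → ℝ → ℝ}

lemma nonneg (hf : DecayBound C n f) : 0 ≤ C := by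
  simpa using (abs_nonneg _).trans (hf 0 0 le_rfl)

lemma mono (hf : DecayBound C n f) (hmn : m ≤ n) : DecayBound C m f := fun s t ht => by
  have h1 := one_le_one_add_abs_add (s := s) ht
  refine (hf s t ht).trans (mul_le_mul_of_nonneg_left ?_ hf.nonneg)
  exact inv_anti₀ (by positivity) (pow_le_pow_right₀ h1 hmn)

lemma mul (hf : DecayBound C n f) (hg : DecayBound D m g) :
    DecayBound (C * D) (n + m) (fun s t => f s t * g s t) := fun s t ht => by
  rw [abs_mul, pow_add, mul_inv, mul_mul_mul_comm]
  exact mul_le_mul (hf s t ht) (hg s t ht) (abs_nonneg _) ((abs_nonneg _).trans (hf s t ht))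

lemma sub (hf : DecayBound C n f) (hg : DecayBound D n g) :
    DecayBound (C + D) n (fun s t => f s t - g s t) := fun s t ht => by
  rw [add_mul]
  exact (abs_sub _ _).trans (add_le_add (hf s t ht) (hg s t ht))

lemma mul_of_growth {K : ℝ} {k : ℕ} (hg : ∀ s t : ℝ, 0 ≤ t → |g s t| ≤ K * (1 + |s| + t) ^ k)
    (hf : DecayBound C (n + k) f) : DecayBound (K * C) n (fun s t => g s t * f s t) :=
  fun s t ht => by
    have hρ : 0 < 1 + |s| + t := zero_lt_one.trans_le (one_le_one_add_abs_add ht)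
    calc |g s t * f s t| ≤ K * (1 + |s| + t) ^ k * (C * ((1 + |s| + t) ^ (n + k))⁻¹) := by
          rw [abs_mul]
          exact mul_le_mul (hg s t ht) (hf s t ht) (abs_nonneg _) ((abs_nonneg _).trans (hg s t ht))
      _ = K * C * ((1 + |s| + t) ^ n)⁻¹ := by
          rw [pow_add]
          field_simp

end DecayBound

namespace PolyDecay

variable {n m : ℕ} {f g : ℝ → ℝ → ℝ}

lemma mono (hf : PolyDecay n f) (hmn : m ≤ n) : PolyDecay m f :=
  let ⟨C, hC⟩ := hf
  ⟨C, hC.mono hmn⟩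

lemma mul (hf : PolyDecay n f) (hg : PolyDecay m g) :
    PolyDecay (n + m) (fun s t => f s t * g s t) :=
  let ⟨_, hC⟩ := hf
  let ⟨_, hD⟩ := hg
  ⟨_, hC.mul hD⟩

lemma sub (hf : PolyDecay n f) (hg : PolyDecay n g) : PolyDecay n (fun s t => f s t - g s t) :=
  let ⟨_, hC⟩ := hf
  let ⟨_, hD⟩ := hg
  ⟨_, hC.sub hD⟩

lemma mul_of_growth {K : ℝ} {k : ℕ} (hg : ∀ s t : ℝ, 0 ≤ t → |g s t| ≤ K * (1 + |s| + t) ^ k)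
    (hf : PolyDecay (n + k) f) : PolyDecay n (fun s t => g s t * f s t) :=
  let ⟨_, hC⟩ := hf
  ⟨_, hC.mul_of_growth hg⟩

end PolyDecay

lemma ae_halfPlane_pos : ∀ᵐ p ∂halfPlane, 0 < p.2 := by
  rw [halfPlane, ← Measure.restrict_univ (μ := (volume : Measure ℝ)), Measure.prod_restrict]
  exact ae_restrict_of_forall_mem (MeasurableSet.univ.prod measurableSet_Ioi) fun p hp => hp.2

lemma integrable_inv_one_add_abs_add_pow_four :
    Integrable (fun p : ℝ × ℝ => ((1 + |p.1| + p.2) ^ 4)⁻¹) halfPlane := by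
  refine (integrable_inv_one_add_sq.mul_prod integrable_inv_one_add_sq.restrict).mono'
    (by fun_prop) ?_
  filter_upwards [ae_halfPlane_pos] with p hp
  have h1 : 1 + p.1 ^ 2 ≤ (1 + |p.1| + p.2) ^ 2 := by nlinarith [sq_abs p.1, abs_nonneg p.1]
  have h2 : 1 + p.2 ^ 2 ≤ (1 + |p.1| + p.2) ^ 2 := by nlinarith [abs_nonneg p.1]
  rw [Real.norm_of_nonneg (by positivity), ← mul_inv]
  refine inv_anti₀ (by positivity) ?_
  calc (1 + p.1 ^ 2) * (1 + p.2 ^ 2) ≤ (1 + |p.1| + p.2) ^ 2 * (1 + |p.1| + p.2) ^ 2 :=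
        mul_le_mul h1 h2 (by positivity) (by positivity)
    _ = (1 + |p.1| + p.2) ^ 4 := by ring

lemma DecayBound.integrable {C : ℝ} {f : ℝ → ℝ → ℝ} (hf : DecayBound C 4 f)
    (hc : Continuous fun p : ℝ × ℝ => f p.1 p.2) :
    Integrable (fun p : ℝ × ℝ => f p.1 p.2) halfPlane :=
  (integrable_inv_one_add_abs_add_pow_four.const_mul C).mono' hc.aestronglyMeasurable <| by
    filter_upwards [ae_halfPlane_pos] with p hp using hf p.1 p.2 hp.le

namespace PolyDecay

variable {f : ℝ → ℝ → ℝ}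

lemma integrable (hf : PolyDecay 4 f) (hc : Continuous fun p : ℝ × ℝ => f p.1 p.2) :
    Integrable (fun p : ℝ × ℝ => f p.1 p.2) halfPlane :=
  let ⟨_, hC⟩ := hf
  hC.integrable hc

lemma integrable_horizontal (hf : PolyDecay 2 f) (hc : Continuous fun p : ℝ × ℝ => f p.1 p.2)
    {t : ℝ} (ht : 0 ≤ t) : Integrable fun s => f s t := by
  obtain ⟨C, hC⟩ := hf
  refine (integrable_inv_one_add_sq.const_mul C).mono'
    (hc.comp (continuous_id.prodMk continuous_const)).aestronglyMeasurable (ae_of_all _ fun s => ?_)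
  have : 1 + s ^ 2 ≤ (1 + |s| + t) ^ 2 := by nlinarith [sq_abs s, abs_nonneg s]
  exact (hC s t ht).trans (mul_le_mul_of_nonneg_left (inv_anti₀ (by positivity) this) hC.nonneg)

lemma integrableOn_vertical (hf : PolyDecay 2 f) (hc : Continuous fun p : ℝ × ℝ => f p.1 p.2)
    (s : ℝ) : IntegrableOn (f s) (Ioi 0) := by
  obtain ⟨C, hC⟩ := hf
  refine (integrable_inv_one_add_sq.const_mul C).integrableOn.mono'
    (hc.comp (Continuous.prodMk_right s)).aestronglyMeasurable ?_
  filter_upwards [ae_restrict_mem measurableSet_Ioi] with t ht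
  have : 1 + t ^ 2 ≤ (1 + |s| + t) ^ 2 := by nlinarith [abs_nonneg s, mem_Ioi.mp ht]
  exact (hC s t (le_of_lt ht)).trans
    (mul_le_mul_of_nonneg_left (inv_anti₀ (by positivity) this) hC.nonneg)

end PolyDecay

lemma intHalf_eq_integral {f : ℝ → ℝ → ℝ}
    (hf : Integrable (fun p : ℝ × ℝ => f p.1 p.2) halfPlane) :
    intHalf f = ∫ p, f p.1 p.2 ∂halfPlane :=
  integral_integral hf

lemma tendsto_integral_of_decayBound {ι : Type*} {l : Filter ι} [l.IsCountablyGenerated]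
    {F : ι → ℝ → ℝ → ℝ} {f : ℝ → ℝ → ℝ} {C : ℝ}
    (hF : ∀ᶠ i in l, (Continuous fun p : ℝ × ℝ => F i p.1 p.2) ∧ DecayBound C 4 (F i))
    (hlim : ∀ s t, Tendsto (fun i => F i s t) l (𝓝 (f s t))) :
    Tendsto (fun i => ∫ p, F i p.1 p.2 ∂halfPlane) l (𝓝 (∫ p, f p.1 p.2 ∂halfPlane)) := by
  refine tendsto_integral_filter_of_dominated_convergence
    (fun p => C * ((1 + |p.1| + p.2) ^ 4)⁻¹) (hF.mono fun i hi => hi.1.aestronglyMeasurable)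
    (hF.mono fun i hi => ?_) (integrable_inv_one_add_abs_add_pow_four.const_mul C)
    (ae_of_all _ fun p => hlim p.1 p.2)
  filter_upwards [ae_halfPlane_pos] with p hp using hi.2 p.1 p.2 hp.le

section PartialDerivatives

variable {w : ℝ → ℝ → ℝ}

lemma hasDerivAt_fderiv_apply_fst (hw : Differentiable ℝ fun p : ℝ × ℝ => w p.1 p.2) (s t : ℝ) :
    HasDerivAt (fun x => w x t) (fderiv ℝ (fun p : ℝ × ℝ => w p.1 p.2) (s, t) (1, 0)) s :=
  (hw (s, t)).hasFDerivAt.comp_hasDerivAt (f := fun x : ℝ => (x, t)) s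
    ((hasDerivAt_id s).prodMk (hasDerivAt_const s t))

lemma hasDerivAt_fderiv_apply_snd (hw : Differentiable ℝ fun p : ℝ × ℝ => w p.1 p.2) (s t : ℝ) :
    HasDerivAt (fun y => w s y) (fderiv ℝ (fun p : ℝ × ℝ => w p.1 p.2) (s, t) (0, 1)) t :=
  (hw (s, t)).hasFDerivAt.comp_hasDerivAt (f := fun y : ℝ => (s, y)) t
    ((hasDerivAt_const t s).prodMk (hasDerivAt_id t))

lemma hasDerivAt_pd1 (hw : Differentiable ℝ fun p : ℝ × ℝ => w p.1 p.2) (s t : ℝ) :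
    HasDerivAt (fun x => w x t) (pd1 w s t) s := by
  rw [pd1, (hasDerivAt_fderiv_apply_fst hw s t).deriv]
  exact hasDerivAt_fderiv_apply_fst hw s t

lemma hasDerivAt_pd2 (hw : Differentiable ℝ fun p : ℝ × ℝ => w p.1 p.2) (s t : ℝ) :
    HasDerivAt (fun y => w s y) (pd2 w s t) t := by
  rw [pd2, (hasDerivAt_fderiv_apply_snd hw s t).deriv]
  exact hasDerivAt_fderiv_apply_snd hw s t

lemma contDiff_pd1 (hw : ContDiff ℝ ∞ fun p : ℝ × ℝ => w p.1 p.2) :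
    ContDiff ℝ ∞ fun p : ℝ × ℝ => pd1 w p.1 p.2 := by
  have h : (fun p : ℝ × ℝ => pd1 w p.1 p.2) =
      fun p => fderiv ℝ (fun p : ℝ × ℝ => w p.1 p.2) p (1, 0) :=
    funext fun p => (hasDerivAt_fderiv_apply_fst (hw.differentiable (by simp)) p.1 p.2).deriv
  rw [h]
  exact (hw.fderiv_right le_rfl).clm_apply contDiff_const

lemma contDiff_pd2 (hw : ContDiff ℝ ∞ fun p : ℝ × ℝ => w p.1 p.2) :
    ContDiff ℝ ∞ fun p : ℝ × ℝ => pd2 w p.1 p.2 := by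
  have h : (fun p : ℝ × ℝ => pd2 w p.1 p.2) =
      fun p => fderiv ℝ (fun p : ℝ × ℝ => w p.1 p.2) p (0, 1) :=
    funext fun p => (hasDerivAt_fderiv_apply_snd (hw.differentiable (by simp)) p.1 p.2).deriv
  rw [h]
  exact (hw.fderiv_right le_rfl).clm_apply contDiff_const

end PartialDerivatives

section Green

variable {F F' : ℝ → ℝ → ℝ}

lemma integral_eq_zero_of_hasDerivAt_fst (hF : ∀ s t, HasDerivAt (fun x => F x t) (F' s t) s)
    (hFc : Continuous fun p : ℝ × ℝ => F p.1 p.2) (hF'c : Continuous fun p : ℝ × ℝ => F' p.1 p.2)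
    (hFd : PolyDecay 2 F) (hF'd : PolyDecay 4 F') :
    ∫ p, F' p.1 p.2 ∂halfPlane = 0 := by
  rw [integral_prod_symm _ (hF'd.integrable hF'c)]
  refine integral_eq_zero_of_ae ?_
  filter_upwards [ae_restrict_mem measurableSet_Ioi] with t ht
  exact integral_eq_zero_of_hasDerivAt_of_integrable (fun s => hF s t)
    ((hF'd.mono (by norm_num)).integrable_horizontal hF'c (le_of_lt ht))
    (hFd.integrable_horizontal hFc (le_of_lt ht))

lemma integral_eq_zero_of_hasDerivAt_snd (hF : ∀ s t, HasDerivAt (fun y => F s y) (F' s t) t)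
    (hF0 : ∀ s, F s 0 = 0)
    (hFc : Continuous fun p : ℝ × ℝ => F p.1 p.2) (hF'c : Continuous fun p : ℝ × ℝ => F' p.1 p.2)
    (hFd : PolyDecay 2 F) (hF'd : PolyDecay 4 F') :
    ∫ p, F' p.1 p.2 ∂halfPlane = 0 := by
  rw [integral_prod _ (hF'd.integrable hF'c)]
  refine integral_eq_zero_of_ae (ae_of_all _ fun s => ?_)
  have hF'i := (hF'd.mono (by norm_num)).integrableOn_vertical hF'c s
  have hlim : Tendsto (F s) atTop (𝓝 0) :=
    tendsto_zero_of_hasDerivAt_of_integrableOn_Ioi (fun t _ => hF s t) hF'i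
      (hFd.integrableOn_vertical hFc s)
  simpa [hF0 s] using integral_Ioi_of_hasDerivAt_of_tendsto' (fun t _ => hF s t) hF'i hlim

lemma integral_wronskian_fst_eq_zero {w w' : ℝ → ℝ → ℝ}
    (hw : ContDiff ℝ ∞ fun p : ℝ × ℝ => w p.1 p.2) (hw' : ContDiff ℝ ∞ fun p : ℝ × ℝ => w' p.1 p.2)
    (sw : SchwartzHalf w) (sw' : SchwartzHalf w') :
    ∫ p, (w' p.1 p.2 * pd1 (pd1 w) p.1 p.2 - w p.1 p.2 * pd1 (pd1 w') p.1 p.2) ∂halfPlane = 0 := by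
  have hd := fun {v : ℝ → ℝ → ℝ} (hv : ContDiff ℝ ∞ fun p : ℝ × ℝ => v p.1 p.2) =>
    hasDerivAt_pd1 (hv.differentiable (by simp))
  refine integral_eq_zero_of_hasDerivAt_fst
    (F := fun s t => w' s t * pd1 w s t - w s t * pd1 w' s t)
    (F' := fun s t => w' s t * pd1 (pd1 w) s t - w s t * pd1 (pd1 w') s t) (fun s t => ?_)
    ((hw'.continuous.mul (contDiff_pd1 hw).continuous).sub
      (hw.continuous.mul (contDiff_pd1 hw').continuous))
    ((hw'.continuous.mul (contDiff_pd1 (contDiff_pd1 hw)).continuous).sub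
      (hw.continuous.mul (contDiff_pd1 (contDiff_pd1 hw')).continuous))
    (((sw'.polyDecay 0 0 1).mul (sw.polyDecay 1 0 1)).sub
      ((sw.polyDecay 0 0 1).mul (sw'.polyDecay 1 0 1)))
    (((sw'.polyDecay 0 0 2).mul (sw.polyDecay 2 0 2)).sub
      ((sw.polyDecay 0 0 2).mul (sw'.polyDecay 2 0 2)))
  refine (((hd hw' s t).mul (hd (contDiff_pd1 hw) s t)).sub
    ((hd hw s t).mul (hd (contDiff_pd1 hw') s t))).congr_deriv ?_
  ring

lemma integral_wronskian_snd_eq_zero {w w' : ℝ → ℝ → ℝ}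
    (hw : ContDiff ℝ ∞ fun p : ℝ × ℝ => w p.1 p.2) (hw' : ContDiff ℝ ∞ fun p : ℝ × ℝ => w' p.1 p.2)
    (sw : SchwartzHalf w) (sw' : SchwartzHalf w')
    (nw : ∀ s, pd2 w s 0 = 0) (nw' : ∀ s, pd2 w' s 0 = 0) :
    ∫ p, (w' p.1 p.2 * pd2 (pd2 w) p.1 p.2 - w p.1 p.2 * pd2 (pd2 w') p.1 p.2) ∂halfPlane = 0 := by
  have hd := fun {v : ℝ → ℝ → ℝ} (hv : ContDiff ℝ ∞ fun p : ℝ × ℝ => v p.1 p.2) =>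
    hasDerivAt_pd2 (hv.differentiable (by simp))
  refine integral_eq_zero_of_hasDerivAt_snd
    (F := fun s t => w' s t * pd2 w s t - w s t * pd2 w' s t)
    (F' := fun s t => w' s t * pd2 (pd2 w) s t - w s t * pd2 (pd2 w') s t) (fun s t => ?_)
    (fun s => by simp [nw s, nw' s])
    ((hw'.continuous.mul (contDiff_pd2 hw).continuous).sub
      (hw.continuous.mul (contDiff_pd2 hw').continuous))
    ((hw'.continuous.mul (contDiff_pd2 (contDiff_pd2 hw)).continuous).sub
      (hw.continuous.mul (contDiff_pd2 (contDiff_pd2 hw')).continuous))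
    (((sw'.polyDecay 0 0 1).mul (sw.polyDecay 0 1 1)).sub
      ((sw.polyDecay 0 0 1).mul (sw'.polyDecay 0 1 1)))
    (((sw'.polyDecay 0 0 2).mul (sw.polyDecay 0 2 2)).sub
      ((sw.polyDecay 0 0 2).mul (sw'.polyDecay 0 2 2)))
  refine (((hd hw' s t).mul (hd (contDiff_pd2 hw) s t)).sub
    ((hd hw s t).mul (hd (contDiff_pd2 hw') s t))).congr_deriv ?_
  ring

-- The `V_θ²` terms cancel, and each Laplacian term is the derivative of a Wronskian, which
-- vanishes at infinity and, for `∂_t`, also on the boundary by the Neumann condition.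
lemma integral_Hop_mul_sub_mul_Hop (θ : ℝ) {w w' : ℝ → ℝ → ℝ}
    (hw : ContDiff ℝ ∞ fun p : ℝ × ℝ => w p.1 p.2) (hw' : ContDiff ℝ ∞ fun p : ℝ × ℝ => w' p.1 p.2)
    (sw : SchwartzHalf w) (sw' : SchwartzHalf w')
    (nw : ∀ s, pd2 w s 0 = 0) (nw' : ∀ s, pd2 w' s 0 = 0) :
    ∫ p, (Hop θ w' p.1 p.2 * w p.1 p.2 - w' p.1 p.2 * Hop θ w p.1 p.2) ∂halfPlane = 0 := by
  have hint₁ : Integrable (fun p : ℝ × ℝ =>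
      w' p.1 p.2 * pd1 (pd1 w) p.1 p.2 - w p.1 p.2 * pd1 (pd1 w') p.1 p.2) halfPlane :=
    (((sw'.polyDecay 0 0 2).mul (sw.polyDecay 2 0 2)).sub
      ((sw.polyDecay 0 0 2).mul (sw'.polyDecay 2 0 2))).integrable
      ((hw'.continuous.mul (contDiff_pd1 (contDiff_pd1 hw)).continuous).sub
        (hw.continuous.mul (contDiff_pd1 (contDiff_pd1 hw')).continuous))
  have hint₂ : Integrable (fun p : ℝ × ℝ =>
      w' p.1 p.2 * pd2 (pd2 w) p.1 p.2 - w p.1 p.2 * pd2 (pd2 w') p.1 p.2) halfPlane :=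
    (((sw'.polyDecay 0 0 2).mul (sw.polyDecay 0 2 2)).sub
      ((sw.polyDecay 0 0 2).mul (sw'.polyDecay 0 2 2))).integrable
      ((hw'.continuous.mul (contDiff_pd2 (contDiff_pd2 hw)).continuous).sub
        (hw.continuous.mul (contDiff_pd2 (contDiff_pd2 hw')).continuous))
  calc ∫ p, (Hop θ w' p.1 p.2 * w p.1 p.2 - w' p.1 p.2 * Hop θ w p.1 p.2) ∂halfPlane
      = ∫ p, ((w' p.1 p.2 * pd1 (pd1 w) p.1 p.2 - w p.1 p.2 * pd1 (pd1 w') p.1 p.2) +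
          (w' p.1 p.2 * pd2 (pd2 w) p.1 p.2 - w p.1 p.2 * pd2 (pd2 w') p.1 p.2)) ∂halfPlane :=
        integral_congr_ae (ae_of_all _ fun p => by simp only [Hop]; ring)
    _ = 0 := by
        rw [integral_add hint₁ hint₂, integral_wronskian_fst_eq_zero hw hw' sw sw',
          integral_wronskian_snd_eq_zero hw hw' sw sw' nw nw', add_zero]

end Green

section Potential

variable {s t : ℝ}

lemma abs_Vpot_le (θ : ℝ) (ht : 0 ≤ t) : |Vpot θ s t| ≤ 1 + |s| + t := by
  calc |t * cos θ - s * sin θ| ≤ |t * cos θ| + |s * sin θ| := abs_sub _ _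
    _ ≤ t * 1 + |s| * 1 := by
        rw [abs_mul, abs_mul, abs_of_nonneg ht]
        gcongr
        exacts [abs_cos_le_one θ, abs_sin_le_one θ]
    _ ≤ 1 + |s| + t := by linarith

lemma abs_Vpot_mul_Vpot_le (θ φ : ℝ) (ht : 0 ≤ t) :
    |Vpot θ s t * Vpot φ s t| ≤ (1 + |s| + t) ^ 2 := by
  rw [abs_mul, sq]
  exact mul_le_mul (abs_Vpot_le θ ht) (abs_Vpot_le φ ht) (abs_nonneg _) (by positivity)

lemma abs_Vpot_sq_sub_Vpot_sq_le (θ θ' : ℝ) (ht : 0 ≤ t) :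
    |Vpot θ' s t ^ 2 - Vpot θ s t ^ 2| ≤ 2 * (1 + |s| + t) ^ 2 := by
  have h' := abs_Vpot_mul_Vpot_le θ' θ' (s := s) ht
  have h := abs_Vpot_mul_Vpot_le θ θ (s := s) ht
  rw [sq, sq]
  linarith [abs_sub (Vpot θ' s t * Vpot θ' s t) (Vpot θ s t * Vpot θ s t)]

lemma abs_Vpot_sub_Vpot_le (θ θ' : ℝ) (ht : 0 ≤ t) :
    |Vpot θ' s t - Vpot θ s t| ≤ (1 + |s| + t) * |θ' - θ| := by
  have e : Vpot θ' s t - Vpot θ s t = t * (cos θ' - cos θ) - s * (sin θ' - sin θ) := by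
    simp only [Vpot]; ring
  rw [e]
  calc |t * (cos θ' - cos θ) - s * (sin θ' - sin θ)|
      ≤ |t * (cos θ' - cos θ)| + |s * (sin θ' - sin θ)| := abs_sub _ _
    _ ≤ t * |θ' - θ| + |s| * |θ' - θ| := by
        rw [abs_mul, abs_mul, abs_of_nonneg ht]
        exact add_le_add (mul_le_mul_of_nonneg_left (abs_cos_sub_cos_le θ' θ) ht)
          (mul_le_mul_of_nonneg_left (abs_sin_sub_sin_le θ' θ) (abs_nonneg s))
    _ ≤ (1 + |s| + t) * |θ' - θ| := by nlinarith [abs_nonneg (θ' - θ)]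

lemma abs_slope_Vpot_sq_le (θ θ' : ℝ) (ht : 0 ≤ t) :
    |slope (fun x => Vpot x s t ^ 2) θ θ'| ≤ 2 * (1 + |s| + t) ^ 2 := by
  rcases eq_or_ne θ' θ with rfl | hne
  · simp only [slope_same, abs_zero]; positivity
  have hpos : 0 < |θ' - θ| := abs_pos.mpr (sub_ne_zero.mpr hne)
  have hsum : |Vpot θ' s t + Vpot θ s t| ≤ 2 * (1 + |s| + t) := by
    linarith [abs_add_le (Vpot θ' s t) (Vpot θ s t), abs_Vpot_le θ' (s := s) ht,
      abs_Vpot_le θ (s := s) ht]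
  rw [slope_def_field, abs_div, div_le_iff₀ hpos,
    show Vpot θ' s t ^ 2 - Vpot θ s t ^ 2 = (Vpot θ' s t - Vpot θ s t) * (Vpot θ' s t + Vpot θ s t)
      by ring, abs_mul]
  calc |Vpot θ' s t - Vpot θ s t| * |Vpot θ' s t + Vpot θ s t|
      ≤ ((1 + |s| + t) * |θ' - θ|) * (2 * (1 + |s| + t)) :=
        mul_le_mul (abs_Vpot_sub_Vpot_le θ θ' ht) hsum (abs_nonneg _) (by positivity)
    _ = 2 * (1 + |s| + t) ^ 2 * |θ' - θ| := by ring

lemma Vpot_add_pi_div_two (θ : ℝ) : Vpot (θ + π / 2) s t = -t * sin θ - s * cos θ := by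
  simp only [Vpot, cos_add_pi_div_two, sin_add_pi_div_two]; ring

lemma hasDerivAt_Vpot (θ : ℝ) : HasDerivAt (fun x => Vpot x s t) (Vpot (θ + π / 2) s t) θ := by
  rw [Vpot_add_pi_div_two]
  exact (((hasDerivAt_cos θ).const_mul t).sub ((hasDerivAt_sin θ).const_mul s)).congr_deriv
    (by ring)

lemma hasDerivAt_Vpot_sq (θ : ℝ) :
    HasDerivAt (fun x => Vpot x s t ^ 2) (2 * Vpot θ s t * Vpot (θ + π / 2) s t) θ :=
  ((hasDerivAt_Vpot θ).pow 2).congr_deriv (by norm_num)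

lemma continuous_Vpot (θ : ℝ) : Continuous fun p : ℝ × ℝ => Vpot θ p.1 p.2 := by
  unfold Vpot; fun_prop

end Potential

namespace IsModelEigen

variable {θ σ : ℝ} {w : ℝ → ℝ → ℝ}

lemma contDiff (hw : IsModelEigen θ w σ) : ContDiff ℝ ∞ fun p : ℝ × ℝ => w p.1 p.2 :=
  contDiff_infty.mpr hw.smooth

lemma polyDecay (hw : IsModelEigen θ w σ) (n : ℕ) : PolyDecay n w :=
  hw.schwartz.polyDecay 0 0 n

lemma integral_mul_self (hw : IsModelEigen θ w σ) :
    ∫ p, w p.1 p.2 * w p.1 p.2 ∂halfPlane = 1 := by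
  have hint : Integrable (fun p : ℝ × ℝ => w p.1 p.2 * w p.1 p.2) halfPlane :=
    ((hw.polyDecay 2).mul (hw.polyDecay 2)).integrable
      (hw.contDiff.continuous.mul hw.contDiff.continuous)
  simp only [← hw.normalized, sq]
  exact (intHalf_eq_integral (f := fun s t => w s t * w s t) hint).symm

-- Green's identity for `H(θ')`, using `H(θ') w = σ w + (V_θ'² - V_θ²) w`.
lemma sub_mul_integral_mul {θ' σ' : ℝ} {w' : ℝ → ℝ → ℝ}
    (hw : IsModelEigen θ w σ) (hw' : IsModelEigen θ' w' σ') :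
    (σ' - σ) * ∫ p, w' p.1 p.2 * w p.1 p.2 ∂halfPlane =
      ∫ p, (Vpot θ' p.1 p.2 ^ 2 - Vpot θ p.1 p.2 ^ 2) * (w' p.1 p.2 * w p.1 p.2) ∂halfPlane := by
  have hcont : Continuous fun p : ℝ × ℝ => w' p.1 p.2 * w p.1 p.2 :=
    hw'.contDiff.continuous.mul hw.contDiff.continuous
  have hint := ((hw'.polyDecay 2).mul (hw.polyDecay 2)).integrable hcont
  have hVint : Integrable (fun p : ℝ × ℝ =>
      (Vpot θ' p.1 p.2 ^ 2 - Vpot θ p.1 p.2 ^ 2) * (w' p.1 p.2 * w p.1 p.2)) halfPlane :=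
    (((hw'.polyDecay 3).mul (hw.polyDecay 3)).mul_of_growth
      fun _ _ ht => abs_Vpot_sq_sub_Vpot_sq_le θ θ' ht).integrable
      ((((continuous_Vpot θ').pow 2).sub ((continuous_Vpot θ).pow 2)).mul hcont)
  have hae : (fun p : ℝ × ℝ => Hop θ' w' p.1 p.2 * w p.1 p.2 - w' p.1 p.2 * Hop θ' w p.1 p.2)
      =ᵐ[halfPlane] fun p => (σ' - σ) * (w' p.1 p.2 * w p.1 p.2) -
        (Vpot θ' p.1 p.2 ^ 2 - Vpot θ p.1 p.2 ^ 2) * (w' p.1 p.2 * w p.1 p.2) := by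
    filter_upwards [ae_halfPlane_pos] with ⟨s, t⟩ ht
    have heig' : Hop θ' w' s t = σ' * w' s t := hw'.eigen s t ht.le
    have heig : Hop θ' w s t = σ * w s t + (Vpot θ' s t ^ 2 - Vpot θ s t ^ 2) * w s t := by
      rw [← hw.eigen s t ht.le]; simp only [Hop]; ring
    rw [heig', heig]; ring
  have hgreen := integral_Hop_mul_sub_mul_Hop θ' hw.contDiff hw'.contDiff hw.schwartz hw'.schwartz
    hw.neumann hw'.neumann
  rwa [integral_congr_ae hae, integral_sub (hint.const_mul _) hVint, integral_const_mul,
    sub_eq_zero] at hgreen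

end IsModelEigen

lemma intHalf_neg (f : ℝ → ℝ → ℝ) : intHalf (fun s t => -f s t) = -intHalf f := by
  simp only [intHalf, integral_neg]

namespace IsSmoothFamily

variable {a b θ : ℝ} {u : ℝ → ℝ → ℝ → ℝ} {σ : ℝ → ℝ}

lemma eventually_isModelEigen (h : IsSmoothFamily a b u σ) (hθ : θ ∈ Ioo a b) :
    ∀ᶠ θ' in 𝓝 θ, IsModelEigen θ' (u θ') (σ θ') :=
  eventually_of_mem (isOpen_Ioo.mem_nhds hθ) h.eigen

lemma continuousAt_param (h : IsSmoothFamily a b u σ) (hθ : θ ∈ Ioo a b) (s t : ℝ) :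
    ContinuousAt (fun θ' => u θ' s t) θ :=
  ((h.smooth 0).continuousOn.continuousAt ((isOpen_Ioo.prod isOpen_univ).mem_nhds
    (mk_mem_prod hθ (mem_univ (s, t))))).comp (f := fun θ' : ℝ => (θ', (s, t)))
    (continuous_id.prodMk continuous_const).continuousAt

lemma exists_eventually_decayBound (h : IsSmoothFamily a b u σ) (hθ : θ ∈ Ioo a b) (n : ℕ) :
    ∃ C, ∀ᶠ θ' in 𝓝 θ, DecayBound C n (u θ') := by
  obtain ⟨ε, hε, C, hC⟩ := h.schwartz θ hθ 0 0 0 n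
  refine ⟨C, ?_⟩
  filter_upwards [isOpen_Ioo.mem_nhds hθ, Metric.ball_mem_nhds θ hε] with θ' hθ' hball
  exact decayBound_of_rpow (hC θ' hθ' (by simpa [Real.dist_eq] using hball))

lemma tendsto_integral_mul (h : IsSmoothFamily a b u σ) (hθ : θ ∈ Ioo a b) :
    Tendsto (fun θ' => ∫ p, u θ' p.1 p.2 * u θ p.1 p.2 ∂halfPlane) (𝓝 θ) (𝓝 1) := by
  have hE := h.eigen θ hθ
  obtain ⟨C, hC⟩ := h.exists_eventually_decayBound hθ 2
  obtain ⟨D, hD⟩ := hE.polyDecay 2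
  rw [← hE.integral_mul_self]
  refine tendsto_integral_of_decayBound (F := fun θ' s t => u θ' s t * u θ s t)
    (f := fun s t => u θ s t * u θ s t) (C := C * D) ?_
    fun s t => (h.continuousAt_param hθ s t).tendsto.mul_const _
  filter_upwards [h.eventually_isModelEigen hθ, hC] with θ' hE' hC'
  exact ⟨hE'.contDiff.continuous.mul hE.contDiff.continuous, hC'.mul hD⟩

lemma tendsto_integral_slope (h : IsSmoothFamily a b u σ) (hθ : θ ∈ Ioo a b) :
    Tendsto (fun θ' => ∫ p, slope (fun x => Vpot x p.1 p.2 ^ 2) θ θ' *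
        (u θ' p.1 p.2 * u θ p.1 p.2) ∂halfPlane) (𝓝[≠] θ)
      (𝓝 (∫ p, 2 * Vpot θ p.1 p.2 * Vpot (θ + π / 2) p.1 p.2 *
        (u θ p.1 p.2 * u θ p.1 p.2) ∂halfPlane)) := by
  have hE := h.eigen θ hθ
  obtain ⟨C, hC⟩ := h.exists_eventually_decayBound hθ 3
  obtain ⟨D, hD⟩ := hE.polyDecay 3
  refine tendsto_integral_of_decayBound
    (F := fun θ' s t => slope (fun x => Vpot x s t ^ 2) θ θ' * (u θ' s t * u θ s t))
    (f := fun s t => 2 * Vpot θ s t * Vpot (θ + π / 2) s t * (u θ s t * u θ s t))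
    (C := 2 * (C * D)) ?_ fun s t => ?_
  · filter_upwards [nhdsWithin_le_nhds (h.eventually_isModelEigen hθ), nhdsWithin_le_nhds hC]
      with θ' hE' hC'
    refine ⟨?_, (hC'.mul hD).mul_of_growth fun _ _ ht => abs_slope_Vpot_sq_le θ θ' ht⟩
    simp only [slope, vsub_eq_sub, smul_eq_mul]
    exact (continuous_const.mul (((continuous_Vpot θ').pow 2).sub ((continuous_Vpot θ).pow 2))).mul
      (hE'.contDiff.continuous.mul hE.contDiff.continuous)
  · exact (hasDerivAt_iff_tendsto_slope.mp (hasDerivAt_Vpot_sq θ)).mul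
      (((h.continuousAt_param hθ s t).tendsto.mono_left nhdsWithin_le_nhds).mul_const _)

-- `slope σ θ θ' · ⟨u_θ', u_θ⟩ = ⟨slope (V²) θ θ' · u_θ', u_θ⟩`, and `⟨u_θ', u_θ⟩ → 1`.
lemma hasDerivAt (h : IsSmoothFamily a b u σ) (hθ : θ ∈ Ioo a b) :
    HasDerivAt σ (∫ p, 2 * Vpot θ p.1 p.2 * Vpot (θ + π / 2) p.1 p.2 *
      (u θ p.1 p.2 * u θ p.1 p.2) ∂halfPlane) θ := by
  have hA := h.tendsto_integral_mul hθ
  have hlim := (h.tendsto_integral_slope hθ).div (hA.mono_left nhdsWithin_le_nhds) one_ne_zero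
  rw [div_one] at hlim
  rw [hasDerivAt_iff_tendsto_slope]
  refine hlim.congr' ?_
  filter_upwards [nhdsWithin_le_nhds (h.eventually_isModelEigen hθ),
    nhdsWithin_le_nhds (hA.eventually_ne one_ne_zero)] with θ' hE' hA'
  simp only [Pi.div_apply, slope, vsub_eq_sub, smul_eq_mul, mul_assoc, integral_const_mul]
  rw [← (h.eigen θ hθ).sub_mul_integral_mul hE', div_eq_iff hA']
  ring

end IsSmoothFamily

/-- The Feynman–Hellmann formula:
`σ'(θ) = 2∫ V_θ ∂_θV_θ u_θ² = −2∫ (t cos θ − s sin θ)(t sin θ + s cos θ) u_θ²`. -/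
theorem feynman_hellmann (a b : ℝ) (u : ℝ → ℝ → ℝ → ℝ) (σ : ℝ → ℝ)
    (h : IsSmoothFamily a b u σ) (θ : ℝ) (hθ : θ ∈ Set.Ioo a b) :
    deriv σ θ = 2 * intHalf (fun s t =>
        Vpot θ s t * (- t * Real.sin θ - s * Real.cos θ) * (u θ s t)^2) ∧
    deriv σ θ = -2 * intHalf (fun s t =>
        (t * Real.cos θ - s * Real.sin θ) * (t * Real.sin θ + s * Real.cos θ) * (u θ s t)^2) := by
  have hE := h.eigen θ hθ
  have hint : Integrable (fun p : ℝ × ℝ => Vpot θ p.1 p.2 * Vpot (θ + π / 2) p.1 p.2 *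
      (u θ p.1 p.2 * u θ p.1 p.2)) halfPlane :=
    (((hE.polyDecay 3).mul (hE.polyDecay 3)).mul_of_growth fun _ _ ht =>
      (abs_Vpot_mul_Vpot_le θ (θ + π / 2) ht).trans_eq (one_mul _).symm).integrable
      (((continuous_Vpot θ).mul (continuous_Vpot _)).mul
        (hE.contDiff.continuous.mul hE.contDiff.continuous))
  have hderiv : deriv σ θ = 2 * intHalf (fun s t =>
      Vpot θ s t * (- t * Real.sin θ - s * Real.cos θ) * (u θ s t)^2) := by
    simp only [← Vpot_add_pi_div_two, sq]
    rw [intHalf_eq_integral hint, ← integral_const_mul, (h.hasDerivAt hθ).deriv]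
    simp only [mul_assoc]
  refine ⟨hderiv, ?_⟩
  have hneg : (fun s t =>
      (t * Real.cos θ - s * Real.sin θ) * (t * Real.sin θ + s * Real.cos θ) * (u θ s t)^2) =
      fun s t => -(Vpot θ s t * (- t * Real.sin θ - s * Real.cos θ) * (u θ s t)^2) := by
    ext s t; simp only [Vpot]; ring
  rw [hderiv, hneg, intHalf_neg]
  ring
end
end

section
/- Let θ ∈ (0, π/2) and let u be a model eigenfunction of H(θ) with eigenvalue σ. Then the function f₀ := (2 sin(2θ))⁻¹ (sin²θ · s² u − ∂_s² u) satisfies (H(θ) − σ) f₀ = −t ∂_s u on ℝ²₊. -/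
open Real MeasureTheory Set

noncomputable section

/-!
Since `(H - σ) u = 0`, only commutators survive in `(H - σ) f₀`:
`[H, s²] = -2 - 4 s ∂_s` and `[H, ∂_s²] = -(V²)'' - 2 (V²)' ∂_s = -2 sin²θ + 4 sin θ · V ∂_s`.
The multiples of `u` cancel, and the multiples of `∂_s u` add up to
`-4 sin θ (s sin θ + V) ∂_s u = -2 sin 2θ · t ∂_s u`.
-/

open Function ContDiff

section PartialDerivatives

variable {f g v : ℝ → ℝ → ℝ}

theorem hasDerivAt_fderiv_apply_one_zero {s t : ℝ} (hv : DifferentiableAt ℝ (uncurry v) (s, t)) :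
    HasDerivAt (fun x => v x t) (fderiv ℝ (uncurry v) (s, t) (1, 0)) s :=
  (hv.hasFDerivAt.comp_hasDerivAt s ((hasDerivAt_id s).prodMk (hasDerivAt_const s t)) :)

theorem hasDerivAt_fderiv_apply_zero_one {s t : ℝ} (hv : DifferentiableAt ℝ (uncurry v) (s, t)) :
    HasDerivAt (fun y => v s y) (fderiv ℝ (uncurry v) (s, t) (0, 1)) t :=
  (hv.hasFDerivAt.comp_hasDerivAt t ((hasDerivAt_const t s).prodMk (hasDerivAt_id t)) :)

theorem pd1_eq_fderiv {s t : ℝ} (hv : DifferentiableAt ℝ (uncurry v) (s, t)) :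
    pd1 v s t = fderiv ℝ (uncurry v) (s, t) (1, 0) :=
  (hasDerivAt_fderiv_apply_one_zero hv).deriv

theorem pd2_eq_fderiv {s t : ℝ} (hv : DifferentiableAt ℝ (uncurry v) (s, t)) :
    pd2 v s t = fderiv ℝ (uncurry v) (s, t) (0, 1) :=
  (hasDerivAt_fderiv_apply_zero_one hv).deriv

theorem hasDerivAt_pd1_s6 {s t : ℝ} (hv : DifferentiableAt ℝ (uncurry v) (s, t)) :
    HasDerivAt (fun x => v x t) (pd1 v s t) s :=
  pd1_eq_fderiv hv ▸ hasDerivAt_fderiv_apply_one_zero hv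

theorem hasDerivAt_pd2_s6 {s t : ℝ} (hv : DifferentiableAt ℝ (uncurry v) (s, t)) :
    HasDerivAt (fun y => v s y) (pd2 v s t) t :=
  pd2_eq_fderiv hv ▸ hasDerivAt_fderiv_apply_zero_one hv

theorem pd1_add (hf : Differentiable ℝ (uncurry f)) (hg : Differentiable ℝ (uncurry g)) :
    pd1 (f + g) = pd1 f + pd1 g :=
  funext₂ fun _ _ => ((hasDerivAt_pd1_s6 (hf _)).add (hasDerivAt_pd1_s6 (hg _))).deriv

theorem pd2_add (hf : Differentiable ℝ (uncurry f)) (hg : Differentiable ℝ (uncurry g)) :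
    pd2 (f + g) = pd2 f + pd2 g :=
  funext₂ fun _ _ => ((hasDerivAt_pd2_s6 (hf _)).add (hasDerivAt_pd2_s6 (hg _))).deriv

theorem pd1_sub (hf : Differentiable ℝ (uncurry f)) (hg : Differentiable ℝ (uncurry g)) :
    pd1 (f - g) = pd1 f - pd1 g :=
  funext₂ fun _ _ => ((hasDerivAt_pd1_s6 (hf _)).sub (hasDerivAt_pd1_s6 (hg _))).deriv

theorem pd2_sub (hf : Differentiable ℝ (uncurry f)) (hg : Differentiable ℝ (uncurry g)) :
    pd2 (f - g) = pd2 f - pd2 g :=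
  funext₂ fun _ _ => ((hasDerivAt_pd2_s6 (hf _)).sub (hasDerivAt_pd2_s6 (hg _))).deriv

theorem pd1_mul (hf : Differentiable ℝ (uncurry f)) (hg : Differentiable ℝ (uncurry g)) :
    pd1 (f * g) = pd1 f * g + f * pd1 g :=
  funext₂ fun _ _ => ((hasDerivAt_pd1_s6 (hf _)).mul (hasDerivAt_pd1_s6 (hg _))).deriv

theorem pd2_mul (hf : Differentiable ℝ (uncurry f)) (hg : Differentiable ℝ (uncurry g)) :
    pd2 (f * g) = pd2 f * g + f * pd2 g :=
  funext₂ fun _ _ => ((hasDerivAt_pd2_s6 (hf _)).mul (hasDerivAt_pd2_s6 (hg _))).deriv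

theorem pd1_const_smul (c : ℝ) (v : ℝ → ℝ → ℝ) : pd1 (c • v) = c • pd1 v :=
  funext₂ fun s _ => congrFun (deriv_const_mul_field' c) s

theorem pd2_const_smul (c : ℝ) (v : ℝ → ℝ → ℝ) : pd2 (c • v) = c • pd2 v :=
  funext₂ fun _ t => congrFun (deriv_const_mul_field' c) t

theorem pd1_congr_of_eqOn_line {t : ℝ} (h : ∀ x, f x t = g x t) (s : ℝ) :
    pd1 f s t = pd1 g s t := by
  simp only [pd1, funext h]

end PartialDerivatives

def IsSmooth (v : ℝ → ℝ → ℝ) : Prop := ContDiff ℝ ∞ (uncurry v)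

namespace IsSmooth

variable {f g v : ℝ → ℝ → ℝ}

theorem differentiable (hv : IsSmooth v) : Differentiable ℝ (uncurry v) :=
  ContDiff.differentiable hv (by simp)

theorem add (hf : IsSmooth f) (hg : IsSmooth g) : IsSmooth (f + g) := ContDiff.add hf hg

theorem mul (hf : IsSmooth f) (hg : IsSmooth g) : IsSmooth (f * g) := ContDiff.mul hf hg

theorem const_smul (c : ℝ) (hv : IsSmooth v) : IsSmooth (c • v) := ContDiff.const_smul c hv

theorem uncurry_pd1 (hv : IsSmooth v) :
    uncurry (pd1 v) = fun p => fderiv ℝ (uncurry v) p (1, 0) :=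
  funext fun p => pd1_eq_fderiv (hv.differentiable p)

theorem uncurry_pd2 (hv : IsSmooth v) :
    uncurry (pd2 v) = fun p => fderiv ℝ (uncurry v) p (0, 1) :=
  funext fun p => pd2_eq_fderiv (hv.differentiable p)

theorem pd1 (hv : IsSmooth v) : IsSmooth (pd1 v) := by
  rw [IsSmooth, hv.uncurry_pd1]
  exact (ContDiff.fderiv_right hv (by simp)).clm_apply contDiff_const

theorem pd2 (hv : IsSmooth v) : IsSmooth (pd2 v) := by
  rw [IsSmooth, hv.uncurry_pd2]
  exact (ContDiff.fderiv_right hv (by simp)).clm_apply contDiff_const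

theorem fderiv_fderiv_apply (hv : IsSmooth v) (p w w' : ℝ × ℝ) :
    fderiv ℝ (fun q => fderiv ℝ (uncurry v) q w) p w' =
      fderiv ℝ (fderiv ℝ (uncurry v)) p w' w := by
  have hD : Differentiable ℝ (fderiv ℝ (uncurry v)) :=
    (ContDiff.fderiv_right (m := ∞) hv (by simp)).differentiable (by simp)
  rw [fderiv_clm_apply (hD p) (differentiableAt_const w)]
  simp

end IsSmooth

section SmoothCalculus

variable {f g v : ℝ → ℝ → ℝ}

theorem pd1_pd2_comm (hv : IsSmooth v) : pd1 (pd2 v) = pd2 (pd1 v) := by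
  funext s t
  have hsymm : IsSymmSndFDerivAt ℝ (uncurry v) (s, t) :=
    ContDiff.contDiffAt hv |>.isSymmSndFDerivAt
      (by rw [minSmoothness_of_isRCLikeNormedField]; norm_cast)
  rw [pd1_eq_fderiv (hv.pd2.differentiable _), pd2_eq_fderiv (hv.pd1.differentiable _),
    hv.uncurry_pd1, hv.uncurry_pd2, hv.fderiv_fderiv_apply, hv.fderiv_fderiv_apply, hsymm.eq]

theorem pd1_pd1_mul (hf : IsSmooth f) (hg : IsSmooth g) :
    pd1 (pd1 (f * g)) = pd1 (pd1 f) * g + 2 * (pd1 f * pd1 g) + f * pd1 (pd1 g) := by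
  rw [pd1_mul hf.differentiable hg.differentiable,
    pd1_add (hf.pd1.mul hg).differentiable (hf.mul hg.pd1).differentiable,
    pd1_mul hf.pd1.differentiable hg.differentiable, pd1_mul hf.differentiable hg.pd1.differentiable]
  ring

theorem pd2_pd2_mul (hf : IsSmooth f) (hg : IsSmooth g) :
    pd2 (pd2 (f * g)) = pd2 (pd2 f) * g + 2 * (pd2 f * pd2 g) + f * pd2 (pd2 g) := by
  rw [pd2_mul hf.differentiable hg.differentiable,
    pd2_add (hf.pd2.mul hg).differentiable (hf.mul hg.pd2).differentiable,
    pd2_mul hf.pd2.differentiable hg.differentiable, pd2_mul hf.differentiable hg.pd2.differentiable]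
  ring

theorem pd1_pd1_pd2_pd2_comm (hv : IsSmooth v) :
    pd1 (pd1 (pd2 (pd2 v))) = pd2 (pd2 (pd1 (pd1 v))) := by
  rw [pd1_pd2_comm hv.pd2, pd1_pd2_comm hv, pd1_pd2_comm hv.pd1.pd2, pd1_pd2_comm hv.pd1]

end SmoothCalculus

theorem isSmooth_sq_fst : IsSmooth (fun s _ => s ^ 2) := by
  unfold IsSmooth
  fun_prop

theorem isSmooth_vpot (θ : ℝ) : IsSmooth (Vpot θ) := by
  unfold IsSmooth Vpot
  fun_prop

theorem pd1_vpot (θ : ℝ) : pd1 (Vpot θ) = fun _ _ => -Real.sin θ :=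
  funext₂ fun s t => by
    have h := ((hasDerivAt_id s).mul_const (Real.sin θ)).const_sub (t * Real.cos θ)
    simp only [id, one_mul] at h
    exact h.deriv

theorem pd1_vpot_sq (θ : ℝ) : pd1 (Vpot θ ^ 2) = -(2 * Real.sin θ) • Vpot θ := by
  rw [sq, pd1_mul (isSmooth_vpot θ).differentiable (isSmooth_vpot θ).differentiable, pd1_vpot]
  funext s t
  simp only [Pi.add_apply, Pi.mul_apply, Pi.smul_apply, smul_eq_mul]
  ring

theorem pd1_pd1_vpot_sq (θ : ℝ) : pd1 (pd1 (Vpot θ ^ 2)) = fun _ _ => 2 * Real.sin θ ^ 2 := by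
  rw [pd1_vpot_sq, pd1_const_smul, pd1_vpot]
  funext s t
  simp only [Pi.smul_apply, smul_eq_mul]
  ring

section Hamiltonian

variable {θ : ℝ} {f g v φ : ℝ → ℝ → ℝ}

theorem hop_eq :
    Hop θ v = Vpot θ ^ 2 * v - (pd1 (pd1 v) + pd2 (pd2 v)) := by
  funext s t
  simp only [Hop, Pi.sub_apply, Pi.add_apply, Pi.mul_apply, Pi.pow_apply]
  ring

theorem hop_sub (hf : IsSmooth f) (hg : IsSmooth g) : Hop θ (f - g) = Hop θ f - Hop θ g := by
  rw [hop_eq, hop_eq, hop_eq, pd1_sub hf.differentiable hg.differentiable,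
    pd1_sub hf.pd1.differentiable hg.pd1.differentiable, pd2_sub hf.differentiable hg.differentiable,
    pd2_sub hf.pd2.differentiable hg.pd2.differentiable]
  ring

theorem hop_const_smul (c : ℝ) (v : ℝ → ℝ → ℝ) : Hop θ (c • v) = c • Hop θ v := by
  rw [hop_eq, hop_eq, pd1_const_smul, pd1_const_smul, pd2_const_smul, pd2_const_smul]
  funext s t
  simp only [Pi.sub_apply, Pi.add_apply, Pi.mul_apply, Pi.smul_apply, smul_eq_mul]
  ring

theorem hop_mul (hφ : IsSmooth φ) (hv : IsSmooth v) :
    Hop θ (φ * v) = φ * Hop θ v - (pd1 (pd1 φ) + pd2 (pd2 φ)) * v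
      - 2 * (pd1 φ * pd1 v + pd2 φ * pd2 v) := by
  rw [hop_eq, hop_eq, pd1_pd1_mul hφ hv, pd2_pd2_mul hφ hv]
  ring

theorem hop_sq_mul (hv : IsSmooth v) :
    Hop θ ((fun s _ => s ^ 2) * v) = (fun s _ => s ^ 2) * Hop θ v - 2 * v
      - 4 * (fun s _ => s) * pd1 v := by
  have hS₁ : pd1 (fun s (_ : ℝ) => s ^ 2) = fun s _ => 2 * s := by funext s t; simp [pd1]
  have hS₁₁ : pd1 (fun s (_ : ℝ) => 2 * s) = 2 := by funext s t; simp [pd1]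
  have hS₂ : pd2 (fun s (_ : ℝ) => s ^ 2) = 0 := by funext s t; simp [pd2]
  have hS₂₂ : pd2 (0 : ℝ → ℝ → ℝ) = 0 := by funext s t; simp [pd2]
  rw [hop_mul isSmooth_sq_fst hv, hS₁, hS₁₁, hS₂, hS₂₂]
  funext s t
  simp only [Pi.sub_apply, Pi.add_apply, Pi.mul_apply, Pi.ofNat_apply]
  ring

theorem hop_pd1_pd1 (hv : IsSmooth v) :
    Hop θ (pd1 (pd1 v)) = pd1 (pd1 (Hop θ v)) - pd1 (pd1 (Vpot θ ^ 2)) * v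
      - 2 * (pd1 (Vpot θ ^ 2) * pd1 v) := by
  have hV : IsSmooth (Vpot θ ^ 2) := by
    simpa only [sq] using (isSmooth_vpot θ).mul (isSmooth_vpot θ)
  rw [hop_eq, hop_eq, pd1_sub (hV.mul hv).differentiable (hv.pd1.pd1.add hv.pd2.pd2).differentiable,
    pd1_add hv.pd1.pd1.differentiable hv.pd2.pd2.differentiable,
    pd1_sub (hV.mul hv).pd1.differentiable (hv.pd1.pd1.pd1.add hv.pd2.pd2.pd1).differentiable,
    pd1_add hv.pd1.pd1.pd1.differentiable hv.pd2.pd2.pd1.differentiable,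
    pd1_pd1_mul hV hv, pd1_pd1_pd2_pd2_comm hv]
  ring

end Hamiltonian

/-- The function `f₀ = (2 sin 2θ)⁻¹ (sin²θ s² u − ∂_s² u)` satisfies
`(H(θ) − σ) f₀ = −t ∂_s u` on `ℝ²₊`. -/
theorem f0_equation (θ : ℝ) (hθ : θ ∈ Set.Ioo 0 (π/2))
    (u : ℝ → ℝ → ℝ) (σ : ℝ) (hu : IsModelEigen θ u σ)
    (f₀ : ℝ → ℝ → ℝ)
    (hf₀ : ∀ s t : ℝ, f₀ s t =
      (2 * Real.sin (2*θ))⁻¹ * (Real.sin θ ^ 2 * s^2 * u s t - pd1 (pd1 u) s t)) :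
    ∀ s t : ℝ, 0 ≤ t → Hop θ f₀ s t - σ * f₀ s t = - t * pd1 u s t := by
  intro s t ht
  set c := (2 * Real.sin (2 * θ))⁻¹
  have hc : c * (2 * (2 * Real.sin θ * Real.cos θ)) = 1 := by
    rw [← sin_two_mul]
    exact inv_mul_cancel₀ (mul_ne_zero two_ne_zero (Real.sin_pos_of_pos_of_lt_pi
      (by linarith [hθ.1]) (by linarith [hθ.2])).ne')
  have hu' : IsSmooth u := contDiff_infty.mpr hu.smooth
  have hf₀' : f₀ = (c * Real.sin θ ^ 2) • ((fun s _ => s ^ 2) * u) - c • pd1 (pd1 u) := by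
    funext x y
    simp only [hf₀, Pi.sub_apply, Pi.smul_apply, Pi.mul_apply, smul_eq_mul]
    ring
  -- every horizontal line `t = const ≥ 0` lies in the half-plane, so the eigenvalue equation
  -- may be differentiated in `s`
  have hline : ∀ x, Hop θ u x t = (σ • u) x t := fun x => hu.eigen x t ht
  have hline₂ : pd1 (pd1 (Hop θ u)) s t = σ * pd1 (pd1 u) s t := by
    rw [pd1_congr_of_eqOn_line (pd1_congr_of_eqOn_line hline) s, pd1_const_smul, pd1_const_smul]
    rfl
  rw [hf₀', hop_sub ((isSmooth_sq_fst.mul hu').const_smul _) (hu'.pd1.pd1.const_smul _),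
    hop_const_smul, hop_const_smul, hop_sq_mul hu', hop_pd1_pd1 hu', pd1_pd1_vpot_sq, pd1_vpot_sq]
  simp only [Pi.sub_apply, Pi.smul_apply, Pi.mul_apply, Pi.ofNat_apply, smul_eq_mul, hline s, hline₂,
    Vpot]
  linear_combination (-(t * pd1 u s t)) * hc
end
end
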